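/- arXiv:2406.05457 — 7 statements merged into one kernel-verified Lean document; each statement's English description precedes it below -/
import Mathlib

section
/- If a subset X of the Baire space ω^ω is such that every continuous image of X into ω^ω fails to be dominating, then X is Menger. (One direction of the Hurewicz–Recław characterization.) -/
open Set

/-- `U` is an open cover of the space `X`. -/
def IsOpenCover {X : Type*} [TopologicalSpace X] (U : Set (Set X)) : Prop :=
  (∀ u ∈ U, IsOpen u) ∧ ⋃₀ U = univ

/-- A space is Menger if for every sequence of open covers there are finite
subfamilies whose union covers the space. -/
def MengerSpace (X : Type*) [TopologicalSpace X] : Prop :=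
  ∀ U : ℕ → Set (Set X), (∀ n, IsOpenCover (U n)) →
    ∃ F : ℕ → Finset (Set X), (∀ n, ↑(F n) ⊆ U n) ∧
      (⋃ n, ⋃₀ (F n : Set (Set X))) = univ

/-- `a ≤* b`: eventual domination in `ω^ω`. -/
def EvLE (a b : ℕ → ℕ) : Prop := ∀ᶠ n in Filter.atTop, a n ≤ b n

/-- A dominating family in `(ω^ω, ≤*)`. -/
def IsDominating (D : Set (ℕ → ℕ)) : Prop :=
  ∀ a : ℕ → ℕ, ∃ b ∈ D, EvLE a b

/-- If no continuous image of `X ⊆ ω^ω` into `ω^ω` is dominating, then `X` is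
Menger (one direction of the Hurewicz–Recław characterization). -/
theorem mengerSpace_of_no_dominating_image (X : Set (ℕ → ℕ))
    (h : ∀ f : X → (ℕ → ℕ), Continuous f → ¬ IsDominating (Set.range f)) :
    MengerSpace X := by
  classical
  intro U hU
  -- existence of a "good" cylinder length at every point, for every n
  have exP : ∀ (x : X) (n : ℕ), ∃ k, ∃ u ∈ U n,
      ∀ y : X, (∀ i < k, (y : ℕ → ℕ) i = (x : ℕ → ℕ) i) → y ∈ u := by
    intro x n
    have hx : x ∈ ⋃₀ U n := by rw [(hU n).2]; trivial
    obtain ⟨u, hu, hxu⟩ := hx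
    obtain ⟨v, hv, hvu⟩ := isOpen_induced_iff.mp ((hU n).1 u hu)
    have hvx : v ∈ nhds (x : ℕ → ℕ) := hv.mem_nhds (by rw [← hvu] at hxu; exact hxu)
    rw [nhds_pi, Filter.mem_pi] at hvx
    obtain ⟨I, hIfin, t, ht, hsub⟩ := hvx
    refine ⟨hIfin.toFinset.sup id + 1, u, hu, ?_⟩
    intro y hy
    have hyv : (y : ℕ → ℕ) ∈ v := by
      apply hsub
      intro i hi
      have hi' : i < hIfin.toFinset.sup id + 1 :=
        Nat.lt_succ_of_le (Finset.le_sup (f := id) (hIfin.mem_toFinset.mpr hi))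
      rw [hy i hi']
      exact mem_of_mem_nhds (ht i)
    rw [← hvu]; exact hyv
  obtain ⟨kk, hkks, hkkm⟩ : ∃ kk : X → ℕ → ℕ,
      (∀ (x : X) (n : ℕ), ∃ u ∈ U n,
        ∀ y : X, (∀ i < kk x n, (y : ℕ → ℕ) i = (x : ℕ → ℕ) i) → y ∈ u) ∧
      (∀ (x : X) (n j : ℕ), (∃ u ∈ U n,
        ∀ y : X, (∀ i < j, (y : ℕ → ℕ) i = (x : ℕ → ℕ) i) → y ∈ u) → kk x n ≤ j) :=
    ⟨fun x n => Nat.find (exP x n), fun x n => Nat.find_spec (exP x n),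
     fun x n j hj => Nat.find_le hj⟩
  clear exP
  -- the continuous function
  set f : X → ℕ → ℕ := fun x n =>
    max (kk x n) ((Finset.range (kk x n)).sup fun i => (x : ℕ → ℕ) i)
    with hfdef
  have keyk : ∀ (x y : X) (n : ℕ),
      (∀ i < kk x n, (y : ℕ → ℕ) i = (x : ℕ → ℕ) i) →
      kk y n = kk x n := by
    intro x y n hxy
    have h1 : kk y n ≤ kk x n := by
      apply hkkm
      obtain ⟨u, hu, hspec⟩ := hkks x n
      exact ⟨u, hu, fun z hz => hspec z (fun i hi => (hz i hi).trans (hxy i hi))⟩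
    have h2 : kk x n ≤ kk y n := by
      apply hkkm
      obtain ⟨u, hu, hspec⟩ := hkks y n
      refine ⟨u, hu, fun z hz => hspec z (fun i hi => ?_)⟩
      exact (hz i hi).trans (hxy i (lt_of_lt_of_le hi h1)).symm
    exact le_antisymm h1 h2
  have keyf : ∀ (x y : X) (n : ℕ),
      (∀ i < kk x n, (y : ℕ → ℕ) i = (x : ℕ → ℕ) i) → f y n = f x n := by
    intro x y n hxy
    have hk := keyk x y n hxy
    rw [hfdef]
    simp only [hk]
    congr 1
    exact Finset.sup_congr rfl (fun i hi => hxy i (Finset.mem_range.mp hi))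
  have hfc : Continuous f := by
    apply continuous_pi
    intro n
    apply IsLocallyConstant.continuous
    rw [IsLocallyConstant.iff_exists_open]
    intro x
    refine ⟨{y : X | ∀ i < kk x n, (y : ℕ → ℕ) i = (x : ℕ → ℕ) i}, ?_, ?_, ?_⟩
    · have hset : {y : X | ∀ i < kk x n, (y : ℕ → ℕ) i = (x : ℕ → ℕ) i}
          = ⋂ i ∈ Finset.range (kk x n),
              ((fun y : X => (y : ℕ → ℕ) i) ⁻¹' {(x : ℕ → ℕ) i}) := by
        ext y
        simp only [Set.mem_setOf_eq, Set.mem_iInter, Finset.mem_range, Set.mem_preimage,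
          Set.mem_singleton_iff]
      rw [hset]
      exact isOpen_biInter_finset fun i _ =>
        IsOpen.preimage ((continuous_apply i).comp continuous_subtype_val)
          (isOpen_discrete _)
    · intro i _; rfl
    · intro y hy; exact keyf x y n hy
  -- a function not dominated by any image
  obtain ⟨a, ha⟩ : ∃ a : ℕ → ℕ, ∀ x : X, ¬ EvLE a (f x) := by
    have hnd := h f hfc
    unfold IsDominating at hnd
    push_neg at hnd
    obtain ⟨a, ha⟩ := hnd
    exact ⟨a, fun x => ha (f x) ⟨x, rfl⟩⟩
  have hfreq : ∀ x : X, ∀ N, ∃ n ≥ N, f x n < a n := by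
    intro x N
    have h1 := ha x
    rw [EvLE, Filter.not_eventually] at h1
    obtain ⟨n, hn, hnp⟩ := (Filter.frequently_atTop.mp h1) N
    exact ⟨n, hn, lt_of_not_ge hnp⟩
  -- the selection
  set Q : (n : ℕ) → ℕ × (Fin (a n) → Fin (a n)) → Prop := fun n p =>
    ∃ u ∈ U n, ∀ y : X, (∀ i : Fin (a n), (i : ℕ) < p.1 → (y : ℕ → ℕ) i = (p.2 i : ℕ)) → y ∈ u
    with hQdef
  have hpick : ∀ (n : ℕ) (p : ℕ × (Fin (a n) → Fin (a n))), ∃ u : Set X,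
      Q n p → u ∈ U n ∧
        ∀ y : X, (∀ i : Fin (a n), (i : ℕ) < p.1 → (y : ℕ → ℕ) i = (p.2 i : ℕ)) → y ∈ u := by
    intro n p
    by_cases hq : Q n p
    · obtain ⟨u, hu, hspec⟩ := hq
      exact ⟨u, fun _ => ⟨hu, hspec⟩⟩
    · exact ⟨∅, fun hq' => absurd hq' hq⟩
  choose pick hpick using hpick
  refine ⟨fun n => ((Finset.range (a n + 1) ×ˢ
      (Finset.univ : Finset (Fin (a n) → Fin (a n)))).filter (Q n)).image (pick n), ?_, ?_⟩
  · intro n s hs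
    simp only [Finset.coe_image, Set.mem_image, Finset.mem_coe, Finset.mem_filter] at hs
    obtain ⟨p, ⟨_, hpQ⟩, rfl⟩ := hs
    exact (hpick n p hpQ).1
  · rw [Set.eq_univ_iff_forall]
    intro x
    obtain ⟨n, -, hn⟩ := hfreq x 0
    have hk : kk x n ≤ f x n := le_max_left _ _
    have hka : kk x n < a n := lt_of_le_of_lt hk hn
    have hxb : ∀ i < kk x n, (x : ℕ → ℕ) i < a n := by
      intro i hi
      exact lt_of_le_of_lt
        (le_trans (Finset.le_sup (f := fun i => (x : ℕ → ℕ) i) (Finset.mem_range.mpr hi))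
          (le_max_right _ _)) hn
    set σ : Fin (a n) → Fin (a n) := fun i =>
      if hxi : (x : ℕ → ℕ) i < a n then ⟨(x : ℕ → ℕ) i, hxi⟩ else ⟨0, i.pos⟩ with hσdef
    have hσ : ∀ i : Fin (a n), (i : ℕ) < kk x n → ((σ i : ℕ) = (x : ℕ → ℕ) i) := by
      intro i hi
      rw [hσdef]
      simp only [dif_pos (hxb i hi)]
    have hQp : Q n (kk x n, σ) := by
      obtain ⟨u, hu, hspec⟩ := hkks x n
      refine ⟨u, hu, fun y hy => hspec y (fun i hi => ?_)⟩
      have hia : i < a n := lt_of_lt_of_le hi (le_of_lt hka)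
      exact (hy ⟨i, hia⟩ hi).trans (hσ ⟨i, hia⟩ hi)
    have hmem : pick n (kk x n, σ) ∈
        ((Finset.range (a n + 1) ×ˢ
          (Finset.univ : Finset (Fin (a n) → Fin (a n)))).filter (Q n)).image (pick n) := by
      refine Finset.mem_image.mpr ⟨(kk x n, σ), Finset.mem_filter.mpr ⟨?_, hQp⟩, rfl⟩
      exact Finset.mem_product.mpr ⟨Finset.mem_range.mpr (Nat.lt_succ_of_lt hka),
        Finset.mem_univ _⟩
    have hxmem : x ∈ pick n (kk x n, σ) :=
      (hpick n _ hQp).2 x (fun i hi => (hσ i hi).symm)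
    exact mem_iUnion.mpr ⟨n, mem_sUnion.mpr ⟨pick n (kk x n, σ), hmem, hxmem⟩⟩
end

section
/- If X is a Menger subset of the Baire space ω^ω, then X is not a dominating family. -/
open Set

/-- A Menger subset of the Baire space is not a dominating family. -/
theorem not_dominating_of_mengerSpace (X : Set (ℕ → ℕ))
    (h : MengerSpace X) : ¬ IsDominating X := by
  classical
  intro hD
  set V : ℕ → ℕ → Set X := fun n k => {x : X | (x : ℕ → ℕ) n < k} with hV
  have hcov : ∀ n, IsOpenCover (Set.range (V n)) := by
    intro n
    constructor
    · rintro u ⟨k, rfl⟩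
      have hc : Continuous (fun x : X => (x : ℕ → ℕ) n) :=
        (continuous_apply n).comp continuous_subtype_val
      exact (isOpen_discrete {m : ℕ | m < k}).preimage hc
    · ext x
      simp only [mem_sUnion, mem_univ, iff_true]
      exact ⟨V n ((x : ℕ → ℕ) n + 1), ⟨_, rfl⟩, Nat.lt_succ_self _⟩
  -- apply Menger once per "row" of the pairing to get an "infinitely often" cover
  choose G hG1 hG2 using fun i => h (fun n => (Set.range (V (Nat.pair i n)) : Set (Set X))) (fun n => hcov _)
  set F : ℕ → Finset (Set X) := fun m => G m.unpair.1 m.unpair.2 with hF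
  have hFsub : ∀ m, ↑(F m) ⊆ Set.range (V m) := by
    intro m
    have := hG1 m.unpair.1 m.unpair.2
    rwa [Nat.pair_unpair] at this
  have hfreq : ∀ (x : X) (i : ℕ), ∃ m, i ≤ m ∧ x ∈ ⋃₀ (F m : Set (Set X)) := by
    intro x i
    have hx : x ∈ ⋃ n, ⋃₀ (G i n : Set (Set X)) := (hG2 i).symm ▸ mem_univ x
    obtain ⟨n, hn⟩ := mem_iUnion.mp hx
    refine ⟨Nat.pair i n, Nat.left_le_pair i n, ?_⟩
    simpa [hF, Nat.unpair_pair] using hn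
  have hEx : ∀ m, ∀ s ∈ F m, ∃ k, s = V m k := by
    intro m s hs
    obtain ⟨k, hk⟩ := hFsub m hs
    exact ⟨k, hk.symm⟩
  set kf : ℕ → Set X → ℕ := fun m s => if hk : ∃ k, s = V m k then hk.choose else 0 with hkf
  set a : ℕ → ℕ := fun m => (F m).sup (kf m) with ha
  have hbound : ∀ (x : X) m, x ∈ ⋃₀ (F m : Set (Set X)) → (x : ℕ → ℕ) m < a m := by
    intro x m hx
    obtain ⟨s, hs, hxs⟩ := hx
    have he : ∃ k, s = V m k := hEx m s hs
    have hks : kf m s = he.choose := by rw [hkf]; exact dif_pos he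
    have h1 : (x : ℕ → ℕ) m < kf m s := by
      rw [hks]
      have := he.choose_spec
      rw [this] at hxs
      exact hxs
    exact lt_of_lt_of_le h1 (Finset.le_sup hs)
  obtain ⟨b, hbX, hab⟩ := hD a
  obtain ⟨N, hN⟩ := Filter.eventually_atTop.mp hab
  obtain ⟨m, hm, hxm⟩ := hfreq ⟨b, hbX⟩ N
  exact absurd (hN m hm) (Nat.not_le.mpr (hbound ⟨b, hbX⟩ m hxm))
end

section
/- Every subset of ω^ω of cardinality strictly less than the dominating number 𝔡 is Menger. -/
open Set

/-- The dominating number `𝔡`. -/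
noncomputable def dNumber : Cardinal :=
  sInf { c | ∃ D : Set (ℕ → ℕ), IsDominating D ∧ Cardinal.mk D = c }

/-- Every subset of `ω^ω` of cardinality less than `𝔡` is Menger. -/
theorem mengerSpace_of_mk_lt_dNumber (X : Set (ℕ → ℕ))
    (h : Cardinal.mk X < dNumber) : MengerSpace X := by
  intro U hU
  classical
  cases isEmpty_or_nonempty X with
  | inl hE =>
      refine ⟨fun _ => ∅, fun n => by simp, ?_⟩
      apply Set.eq_univ_of_forall
      intro x
      exact (hE.false x).elim
  | inr hNE =>
      have key : ∀ n, ∃ u : ℕ → Set X, (∀ m, u m ∈ U n) ∧ (⋃ m, u m) = univ := by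
        intro n
        obtain ⟨hopen, hcov⟩ := hU n
        obtain ⟨T, hTc, hTsub, hTu⟩ :=
          TopologicalSpace.isOpen_sUnion_countable (U n) hopen
        rw [hcov] at hTu
        have hTne : T.Nonempty := by
          by_contra hte
          rw [Set.not_nonempty_iff_eq_empty] at hte
          rw [hte, Set.sUnion_empty] at hTu
          obtain ⟨x⟩ := hNE
          exact (hTu ▸ (Set.mem_univ x) : x ∈ (∅ : Set X))
        obtain ⟨u, hu⟩ := Set.Countable.exists_eq_range hTc hTne
        refine ⟨u, fun m => hTsub (hu ▸ Set.mem_range_self m), ?_⟩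
        rw [← Set.sUnion_range, ← hu, hTu]
      choose u hu hcov using key
      have hx : ∀ (x : X) (n : ℕ), ∃ m, x ∈ u n m := by
        intro x n
        have hxu : x ∈ ⋃ m, u n m := by rw [hcov n]; trivial
        exact Set.mem_iUnion.mp hxu
      let f : X → ℕ → ℕ := fun x n => Nat.find (hx x n)
      have hD : ¬ IsDominating (Set.range f) := by
        intro hd
        have hle : dNumber ≤ Cardinal.mk (Set.range f) :=
          csInf_le' ⟨_, hd, rfl⟩
        exact absurd hle (not_le.2 (lt_of_le_of_lt Cardinal.mk_range_le h))
      rw [IsDominating] at hD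
      push_neg at hD
      obtain ⟨g, hg⟩ := hD
      refine ⟨fun n => (Finset.range (g n)).image (u n), ?_, ?_⟩
      · intro n s hs
        simp only [Finset.coe_image, Finset.coe_range, Set.mem_image] at hs
        obtain ⟨m, _, rfl⟩ := hs
        exact hu n m
      · apply Set.eq_univ_of_forall
        intro x
        have hgx := hg (f x) ⟨x, rfl⟩
        rw [EvLE, Filter.not_eventually] at hgx
        obtain ⟨n, hn⟩ := hgx.exists
        push_neg at hn
        refine Set.mem_iUnion.mpr ⟨n, ?_⟩
        refine Set.mem_sUnion.mpr ⟨u n (f x n), ?_, Nat.find_spec (hx x n)⟩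
        simp only [Finset.coe_image, Finset.coe_range, Set.mem_image, Set.mem_Iio]
        exact ⟨f x n, hn, rfl⟩
end

section
/- If X is a Hurewicz subspace of ω^ω, then X is bounded with respect to ≤*. -/
open Set

/-- A space is Hurewicz if for every sequence of open covers there are finite
subfamilies `F n` such that every point belongs to `⋃ F n` for all but
finitely many `n`. -/
def HurewiczSpace (X : Type*) [TopologicalSpace X] : Prop :=
  ∀ U : ℕ → Set (Set X), (∀ n, IsOpenCover (U n)) →
    ∃ F : ℕ → Finset (Set X), (∀ n, ↑(F n) ⊆ U n) ∧
      ∀ x : X, ∀ᶠ n in Filter.atTop, x ∈ ⋃₀ (F n : Set (Set X))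

/-- A Hurewicz subspace of the Baire space is bounded with respect to `≤*`. -/
theorem bounded_of_hurewiczSpace (X : Set (ℕ → ℕ))
    (h : HurewiczSpace X) : ∃ b : ℕ → ℕ, ∀ x ∈ X, EvLE x b := by
  classical
  set U : ℕ → Set (Set X) :=
    fun n => Set.range (fun k : ℕ => {x : X | (x : ℕ → ℕ) n < k}) with hU
  have hcov : ∀ n, IsOpenCover (U n) := by
    intro n
    constructor
    · rintro u ⟨k, rfl⟩
      have hc : Continuous fun x : X => (x : ℕ → ℕ) n :=
        (continuous_apply n).comp continuous_subtype_val
      exact isOpen_Iio.preimage hc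
    · ext x
      simp only [Set.mem_sUnion, Set.mem_univ, iff_true]
      exact ⟨_, ⟨(x : ℕ → ℕ) n + 1, rfl⟩, Nat.lt_succ_self _⟩
  obtain ⟨F, hF, hev⟩ := h U hcov
  set g : ℕ → Set X → ℕ := fun n s =>
    if hs : ∃ k, s = {x : X | (x : ℕ → ℕ) n < k} then hs.choose else 0 with hg
  refine ⟨fun n => (F n).sup (g n), ?_⟩
  intro x hx
  have := hev ⟨x, hx⟩
  refine this.mono fun n hn => ?_
  obtain ⟨s, hsF, hxs⟩ := hn
  have hsU : s ∈ U n := hF n hsF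
  obtain ⟨k, hk⟩ := hsU
  have hex : ∃ k, s = {x : X | (x : ℕ → ℕ) n < k} := ⟨k, hk.symm⟩
  have hform : s = {x : X | (x : ℕ → ℕ) n < hex.choose} := hex.choose_spec
  have hxk : x n < hex.choose := by
    have := hxs
    rw [hform] at this
    exact this
  have hle : g n s ≤ (F n).sup (g n) := Finset.le_sup hsF
  have heq : g n s = hex.choose := by simp [hg, hex]
  show x n ≤ (F n).sup (g n)
  omega
end

section
/- Let X be a free ultrafilter on ω, viewed as a subspace of the Cantor space 2^ω via characteristic functions. Then Alice has a winning strategy in the grouped Menger game played on X. In particular, using the covers U_n = { U_{[n,k)} : k > n } where U_{[n,k)} = { a ⊆ ω : a ∩ [n,k) ≠ ∅ }, for any increasing sequence 0 = i_0 < i_1 < i_2 < ⋯ of natural numbers, X is not contained in ⋃_{k∈ω} ( U_{[i_{2k}, i_{2k+1})} ∩ U_{[i_{2k+1}, i_{2k+2})} ). -/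
/-!
Alice works with the covers `{U_{[n,k)} : k > n}`, always taking `n` to be the right end of
the interval found at the previous subround: a finite subfamily of this cover lies in a single
`U_{[n,k)}`, and that `k` is her next `n`. Bob's moves thus produce an increasing sequence
`0 = s₀ < s₁ < ⋯`, and with rounds of two subrounds, whatever he covers in round `n` lies in
`U_{[s_{2n}, s_{2n+1})} ∩ U_{[s_{2n+1}, s_{2n+2})}`. Either the union of the even intervals
`[s_{2k}, s_{2k+1})` or its complement lies in the ultrafilter, and that set misses all these
intersections.
-/

open Set

/-- Subround boundaries in the grouped Menger game: `groupedL len F n` is the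
index of the first subround of round `n`, when Bob plays `F` and Alice's group
lengths are given by the strategy `len` applied to the current history. -/
def groupedL {X : Type*} [TopologicalSpace X]
    (len : List (Finset (Set X)) → ℕ) (F : ℕ → Finset (Set X)) : ℕ → ℕ
  | 0 => 0
  | n + 1 =>
      groupedL len F n +
        len (List.ofFn fun i : Fin (groupedL len F n) => F i)

/-- Alice has a winning strategy in the grouped Menger game on `X`: she chooses
group lengths `len h > 0` and open covers `A h` depending on the history `h` of
Bob's moves, so that for every legal play of Bob the grouped intersections fail
to cover `X`. -/
def AliceWinningStrategyGroupedMenger (X : Type*) [TopologicalSpace X] : Prop :=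
  ∃ len : List (Finset (Set X)) → ℕ, ∃ A : List (Finset (Set X)) → Set (Set X),
    (∀ h, 0 < len h) ∧ (∀ h, IsOpenCover (A h)) ∧
    ∀ F : ℕ → Finset (Set X),
      (∀ n, ↑(F n) ⊆ A (List.ofFn fun i : Fin n => F i)) →
      (⋃ n, ⋂ i ∈ Finset.Ico (groupedL len F n) (groupedL len F (n + 1)),
        ⋃₀ ((F i : Set (Set X)))) ≠ univ

theorem Ultrafilter.exists_mem_disjoint_even_or_disjoint_odd {α : Type*} (U : Ultrafilter α)
    {s : ℕ → Set α} (hs : Pairwise (Function.onFun Disjoint s)) :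
    ∃ a ∈ U, ∀ k, Disjoint a (s (2 * k)) ∨ Disjoint a (s (2 * k + 1)) := by
  by_cases heven : ⋃ j, s (2 * j) ∈ U
  · exact ⟨_, heven, fun k => Or.inr <| disjoint_iUnion_left.2 fun j => hs (by omega)⟩
  · exact ⟨_, U.compl_mem_iff_notMem.2 heven, fun k => Or.inl <|
      disjoint_compl_left.mono_right (subset_iUnion (fun j => s (2 * j)) k)⟩

theorem Ultrafilter.exists_mem_disjoint_even_or_disjoint_odd_Ico {α : Type*} [Preorder α]
    (U : Ultrafilter α) {i : ℕ → α} (hi : Monotone i) :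
    ∃ a ∈ U, ∀ k, Disjoint a (Ico (i (2 * k)) (i (2 * k + 1))) ∨
      Disjoint a (Ico (i (2 * k + 1)) (i (2 * k + 2))) := by
  simpa only [Order.succ_eq_add_one, add_assoc, Nat.reduceAdd] using
    U.exists_mem_disjoint_even_or_disjoint_odd hi.pairwise_disjoint_on_Ico_succ

theorem groupedL_const {X : Type*} [TopologicalSpace X] (m : ℕ) (F : ℕ → Finset (Set X))
    (n : ℕ) : groupedL (fun _ => m) F n = m * n := by
  induction n with
  | zero => rfl
  | succ n ih => rw [groupedL, ih, Nat.mul_succ]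

section CantorSubspace

variable {X : Set (ℕ → Bool)}

variable (X) in
/-- The basic open set `U_{[n,k)}` of the paper, restricted to `X`. -/
def meetsIco (n k : ℕ) : Set X := {f | ({j | f.1 j = true} ∩ Ico n k).Nonempty}

variable (X) in
def meetsIcoCover (n : ℕ) : Set (Set X) := meetsIco X n '' Ioi n

theorem isOpen_meetsIco (n k : ℕ) : IsOpen (meetsIco X n k) := by
  have : meetsIco X n k = ⋃ j ∈ Ico n k, {f : X | f.1 j = true} := by
    ext f
    simp [meetsIco, Set.Nonempty, and_comm]
  rw [this]
  exact isOpen_biUnion fun j _ => IsOpen.preimage (f := fun f : X => f.1 j)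
    ((continuous_apply j).comp continuous_subtype_val) (isOpen_discrete {true})

theorem meetsIco_mono (n : ℕ) {k k' : ℕ} (h : k ≤ k') : meetsIco X n k ⊆ meetsIco X n k' :=
  fun _ hf => hf.mono (inter_subset_inter_right _ (Ico_subset_Ico_right h))

theorem isOpenCover_meetsIcoCover (hinf : ∀ f ∈ X, {n | f n = true}.Infinite) (n : ℕ) :
    IsOpenCover (meetsIcoCover X n) := by
  refine ⟨?_, eq_univ_of_forall fun f => ?_⟩
  · rintro _ ⟨k, -, rfl⟩
    exact isOpen_meetsIco n k
  · obtain ⟨j, hj, hnj⟩ := (hinf f f.2).exists_gt n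
    exact ⟨meetsIco X n (j + 1), mem_image_of_mem _ (mem_Ioi.2 (by omega)), j, hj, hnj.le, by omega⟩

theorem exists_sUnion_subset_meetsIco {n : ℕ} {F : Finset (Set X)}
    (hF : ↑F ⊆ meetsIcoCover X n) : ∃ k, n < k ∧ ⋃₀ ↑F ⊆ meetsIco X n k := by
  classical
  obtain ⟨K, -, rfl⟩ := Finset.subset_set_image_iff.1 hF
  refine ⟨max (n + 1) (K.sup id), by omega, ?_⟩
  rw [Finset.coe_image, sUnion_image]
  exact iUnion₂_subset fun k hk => meetsIco_mono n (le_max_of_le_right (K.le_sup (f := id) hk))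

open Classical in
variable (X) in
/-- Only the value on Bob's legal answers `↑F ⊆ meetsIcoCover X n` matters. -/
noncomputable def nextIndex (n : ℕ) (F : Finset (Set X)) : ℕ :=
  if h : ∃ k, n < k ∧ ⋃₀ ↑F ⊆ meetsIco X n k then h.choose else n + 1

theorem lt_nextIndex (n : ℕ) (F : Finset (Set X)) : n < nextIndex X n F := by
  unfold nextIndex
  split_ifs with h
  · exact h.choose_spec.1
  · exact n.lt_succ_self

theorem sUnion_subset_meetsIco_nextIndex {n : ℕ} {F : Finset (Set X)}
    (hF : ↑F ⊆ meetsIcoCover X n) : ⋃₀ ↑F ⊆ meetsIco X n (nextIndex X n F) := by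
  have h := exists_sUnion_subset_meetsIco hF
  rw [nextIndex, dif_pos h]
  exact h.choose_spec.2

variable (X) in
noncomputable def aliceIndex (h : List (Finset (Set X))) : ℕ := h.foldl (nextIndex X) 0

theorem aliceIndex_ofFn_succ (F : ℕ → Finset (Set X)) (n : ℕ) :
    aliceIndex X (List.ofFn fun i : Fin (n + 1) => F i) =
      nextIndex X (aliceIndex X (List.ofFn fun i : Fin n => F i)) (F n) := by
  rw [aliceIndex, List.ofFn_succ', List.concat_eq_append, List.foldl_concat]
  rfl

theorem strictMono_aliceIndex_ofFn (F : ℕ → Finset (Set X)) :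
    StrictMono fun n => aliceIndex X (List.ofFn fun i : Fin n => F i) :=
  strictMono_nat_of_lt_succ fun n => (aliceIndex_ofFn_succ F n).symm ▸ lt_nextIndex _ _

theorem aliceWinningStrategyGroupedMenger_of_forall_strictMono
    (hinf : ∀ f ∈ X, {n | f n = true}.Infinite)
    (hX : ∀ i : ℕ → ℕ, StrictMono i → ∃ f ∈ X, ∀ k,
      Disjoint {n | f n = true} (Ico (i (2 * k)) (i (2 * k + 1))) ∨
        Disjoint {n | f n = true} (Ico (i (2 * k + 1)) (i (2 * k + 2)))) :
    AliceWinningStrategyGroupedMenger X := by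
  refine ⟨fun _ => 2, fun h => meetsIcoCover X (aliceIndex X h), fun _ => two_pos,
    fun _ => isOpenCover_meetsIcoCover hinf _, fun F hF hcov => ?_⟩
  set s := fun n => aliceIndex X (List.ofFn fun i : Fin n => F i)
  have hmove (n : ℕ) : ⋃₀ ↑(F n) ⊆ meetsIco X (s n) (s (n + 1)) := by
    simp only [s, aliceIndex_ofFn_succ]
    exact sUnion_subset_meetsIco_nextIndex (hF n)
  obtain ⟨f, hfX, hf⟩ := hX s (strictMono_aliceIndex_ofFn F)
  obtain ⟨n, hn⟩ := mem_iUnion.1 (hcov ▸ mem_univ (⟨f, hfX⟩ : X))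
  simp only [groupedL_const, mem_iInter₂, Finset.mem_Ico] at hn
  have h₁ := hmove (2 * n) (hn (2 * n) (by omega))
  have h₂ := hmove (2 * n + 1) (hn (2 * n + 1) (by omega))
  rcases hf n with hd | hd
  · exact not_disjoint_iff_nonempty_inter.2 h₁ hd
  · exact not_disjoint_iff_nonempty_inter.2 h₂ hd

end CantorSubspace

/-- A free ultrafilter on `ω`, viewed as a subspace of the Cantor space via
characteristic functions, is a space on which Alice has a winning strategy in
the grouped Menger game.  In particular, for any strictly increasing sequence
`i` with `i 0 = 0`, the ultrafilter is not covered by the sets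
`U_{[i_{2k}, i_{2k+1})} ∩ U_{[i_{2k+1}, i_{2k+2})}`. -/
theorem ultrafilter_aliceWins_groupedMenger (U : Ultrafilter ℕ)
    (hfree : ∀ a ∈ U, a.Infinite) :
    AliceWinningStrategyGroupedMenger
      ({f : ℕ → Bool | {n | f n = true} ∈ U}) ∧
    ∀ i : ℕ → ℕ, StrictMono i → i 0 = 0 →
      ∃ a ∈ U, ∀ k : ℕ,
        a ∩ Set.Ico (i (2 * k)) (i (2 * k + 1)) = ∅ ∨
        a ∩ Set.Ico (i (2 * k + 1)) (i (2 * k + 2)) = ∅ := by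
  refine ⟨aliceWinningStrategyGroupedMenger_of_forall_strictMono (fun f hf => hfree _ hf)
    fun i hi => ?_, fun i hi _ => ?_⟩
  · classical
    obtain ⟨a, ha, hdisj⟩ := U.exists_mem_disjoint_even_or_disjoint_odd_Ico hi.monotone
    have hsupp : {n | decide (n ∈ a) = true} = a := by simp
    exact ⟨fun n => decide (n ∈ a), by rwa [mem_ofPred_eq, hsupp], by rwa [hsupp]⟩
  · simpa only [← disjoint_iff_inter_eq_empty] using
      U.exists_mem_disjoint_even_or_disjoint_odd_Ico hi.monotone
end

section
/- Let X ⊆ ω^ω (X a set of strictly increasing functions) be such that |X| = 𝔡 and for every d ∈ ω^ω the set { x ∈ X : x ≤* d } has cardinality strictly less than 𝔡. Then the subspace X ∪ Fin of P(ω) (identified with 2^ω), where Fin is the set of characteristic functions of finite subsets of ω and elements of X are identified with characteristic functions of their ranges, is Menger. -/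
open Set

/-!
Fix open covers `U n`. For each `n`, finitely many members of `U n` cover every point that vanishes
on `[n, M n)`: cover the finitely many finite sets below `n` and let `M n` exceed the radii of the
cylinders around them inside the chosen members. This handles `Fin`, and every `x ∈ X` whose range
misses some interval `[n, M n)`. An `x` whose range meets all of them satisfies `x ≤* M^[k+1] 0`,
so there are fewer than `𝔡` such `x`, and a set of size `< 𝔡` is Menger for countable covers.
Two disjoint subsequences of the covers serve the two parts.
-/

theorem MengerSpace.of_two_sequences {X : Type*} [TopologicalSpace X]
    (h : ∀ U W : ℕ → Set (Set X), (∀ n, IsOpenCover (U n)) → (∀ n, IsOpenCover (W n)) →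
      ∃ F G : ℕ → Finset (Set X), (∀ n, ↑(F n) ⊆ U n) ∧ (∀ n, ↑(G n) ⊆ W n) ∧
        ∀ x, (∃ n, x ∈ ⋃₀ (F n : Set (Set X))) ∨ ∃ n, x ∈ ⋃₀ (G n : Set (Set X))) :
    MengerSpace X := by
  intro U hU
  let e := Equiv.natSumNatEquivNat
  obtain ⟨F, G, hF, hG, hcover⟩ :=
    h (fun n => U (e (.inl n))) (fun n => U (e (.inr n))) (fun _ => hU _) (fun _ => hU _)
  refine ⟨fun k => Sum.elim F G (e.symm k), fun k => ?_, eq_univ_of_forall fun x => ?_⟩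
  · rw [← e.apply_symm_apply k]
    cases e.symm k with
    | inl n => simpa using hF n
    | inr n => simpa using hG n
  · rcases hcover x with ⟨n, hn⟩ | ⟨n, hn⟩
    · exact mem_iUnion.2 ⟨e (.inl n), by simpa using hn⟩
    · exact mem_iUnion.2 ⟨e (.inr n), by simpa using hn⟩

theorem IsOpenCover.exists_seq {X : Type*} [TopologicalSpace X] [SecondCountableTopology X]
    [Nonempty X] {U : Set (Set X)} (hU : IsOpenCover U) :
    ∃ V : ℕ → Set X, (∀ k, V k ∈ U) ∧ ⋃ k, V k = univ := by
  obtain ⟨T, hTc, hTU, hT⟩ := TopologicalSpace.isOpen_sUnion_countable U hU.1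
  rw [hU.2] at hT
  obtain ⟨V, rfl⟩ := hTc.exists_eq_range (Nonempty.of_sUnion_eq_univ hT)
  exact ⟨V, fun k => hTU (mem_range_self k), by rwa [← sUnion_range]⟩

theorem PiNat.exists_cylinder_subset {E : ℕ → Type*} [∀ n, TopologicalSpace (E n)]
    [∀ n, DiscreteTopology (E n)] {w : Set (∀ n, E n)} (hw : IsOpen w) {p : ∀ n, E n}
    (hp : p ∈ w) : ∃ m, PiNat.cylinder p m ⊆ w := by
  obtain ⟨_, ⟨y, m, rfl⟩, hpy, hsub⟩ :=
    (PiNat.isTopologicalBasis_cylinders E).exists_subset_of_mem_open hp hw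
  exact ⟨m, PiNat.mem_cylinder_iff_eq.1 hpy ▸ hsub⟩

theorem IsOpenCover.exists_mem_preimage_cylinder_subset {E : ℕ → Type*}
    [∀ n, TopologicalSpace (E n)] [∀ n, DiscreteTopology (E n)] {S : Set (∀ n, E n)}
    {U : Set (Set S)} (hU : IsOpenCover U) (p : S) :
    ∃ u ∈ U, ∃ m, Subtype.val ⁻¹' PiNat.cylinder p.1 m ⊆ u := by
  obtain ⟨u, hu, hpu⟩ := mem_sUnion.1 (hU.2.symm ▸ mem_univ p)
  obtain ⟨w, hw, rfl⟩ := isOpen_induced_iff.1 (hU.1 u hu)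
  obtain ⟨m, hm⟩ := PiNat.exists_cylinder_subset hw hpu
  exact ⟨_, hu, m, preimage_mono hm⟩

theorem exists_finset_cover_of_eq_false_on_Ico {S : Set (ℕ → Bool)}
    (hS : ∀ s : Finset ℕ, (fun i => decide (i ∈ s)) ∈ S) {U : Set (Set S)}
    (hU : IsOpenCover U) (n : ℕ) :
    ∃ F : Finset (Set S), ↑F ⊆ U ∧
      ∃ m, ∀ q : S, (∀ i ∈ Ico n m, q.1 i = false) → q ∈ ⋃₀ (F : Set (Set S)) := by
  choose u hu m hm using fun s : Finset ℕ =>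
    hU.exists_mem_preimage_cylinder_subset ⟨_, hS s⟩
  refine ⟨(Finset.range n).powerset.image u, by simpa [subset_def] using fun s _ => hu s,
    (Finset.range n).powerset.sup m, fun q hq => ?_⟩
  set s := (Finset.range n).filter (fun i => q.1 i = true)
  have hs : s ∈ (Finset.range n).powerset := Finset.mem_powerset.2 (Finset.filter_subset _ _)
  refine mem_sUnion.2 ⟨u s, Finset.mem_coe.2 (Finset.mem_image_of_mem u hs), hm s ?_⟩
  intro i hi
  by_cases hin : i < n
  · simp [s, hin]
  · have hIco : i ∈ Ico n ((Finset.range n).powerset.sup m) :=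
      ⟨not_lt.1 hin, hi.trans_le (Finset.le_sup hs)⟩
    simp [s, hin, hq i hIco]

theorem not_isDominating_of_mk_lt_dNumber {D : Set (ℕ → ℕ)} (h : Cardinal.mk D < dNumber) :
    ¬ IsDominating D := fun hD =>
  (csInf_le' (s := {c | ∃ D, IsDominating D ∧ Cardinal.mk D = c}) ⟨D, hD, rfl⟩).not_gt h

/-- The indices of the covering sets, as functions of `n`, form a non-dominating family. -/
theorem exists_forall_exists_lt_mem_of_mk_lt_dNumber {α : Type*} {ι : Type}
    (V : ℕ → ℕ → Set α) (hV : ∀ n, ⋃ k, V n k = univ) (y : ι → α)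
    (hι : Cardinal.mk ι < dNumber) :
    ∃ g : ℕ → ℕ, ∀ i, ∃ n, ∃ k < g n, y i ∈ V n k := by
  classical
  have hmem (i : ι) (n : ℕ) : ∃ k, y i ∈ V n k := mem_iUnion.1 (hV n ▸ mem_univ (y i))
  let code (i : ι) (n : ℕ) : ℕ := Nat.find (hmem i n)
  obtain ⟨g, hg⟩ : ∃ g, ∀ b ∈ range code, ¬ EvLE g b := by
    simpa [IsDominating] using
      not_isDominating_of_mk_lt_dNumber (Cardinal.mk_range_le.trans_lt hι)
  refine ⟨g, fun i => ?_⟩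
  obtain ⟨n, hn⟩ := (Filter.not_eventually.1 (hg _ (mem_range_self i))).exists
  exact ⟨n, code i n, not_le.1 hn, Nat.find_spec (hmem i n)⟩

theorem StrictMono.lt_iterate_of_forall_exists_mem_Ico {x M : ℕ → ℕ} (hx : StrictMono x)
    (h : ∀ n, ∃ j, x j ∈ Ico n (M n)) (k : ℕ) : x k < M^[k + 1] 0 := by
  induction k with
  | zero =>
    obtain ⟨j, -, hj⟩ := h 0
    exact (hx.monotone (Nat.zero_le j)).trans_lt hj
  | succ k ih =>
    obtain ⟨j, hjl, hjr⟩ := h (M^[k + 1] 0)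
    have hkj : k < j := hx.lt_iff_lt.1 (ih.trans_le hjl)
    rw [Function.iterate_succ_apply']
    exact (hx.monotone hkj).trans_lt hjr

theorem bartoszynski_tsaban_menger_general (X : Set (ℕ → ℕ))
    (hmono : ∀ x ∈ X, StrictMono x)
    (hsmall : ∀ d : ℕ → ℕ, Cardinal.mk {x : X // EvLE (x : ℕ → ℕ) d} < dNumber) :
    MengerSpace
      ({f : ℕ → Bool | (∃ x ∈ X, {n | f n = true} = Set.range x) ∨
        {n | f n = true}.Finite}) := by
  set S := {f : ℕ → Bool | (∃ x ∈ X, {n | f n = true} = Set.range x) ∨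
    {n | f n = true}.Finite}
  classical
  have hfin (s : Finset ℕ) : (fun i => decide (i ∈ s)) ∈ S :=
    Or.inr (s.finite_toSet.subset fun i => by simp)
  have : Nonempty S := ⟨⟨_, hfin ∅⟩⟩
  refine MengerSpace.of_two_sequences fun U W hU hW => ?_
  choose F hFU M hM using fun n => exists_finset_cover_of_eq_false_on_Ico hfin (hU n) n
  choose V hVW hV using fun n => (hW n).exists_seq
  let φ (x : {x : X // EvLE x fun k => M^[k + 1] 0}) : S :=
    ⟨fun i => decide (i ∈ range x.1.1), Or.inl ⟨x.1.1, x.1.2, by ext; simp⟩⟩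
  obtain ⟨g, hg⟩ := exists_forall_exists_lt_mem_of_mk_lt_dNumber V hV φ (hsmall _)
  refine ⟨F, fun n => (Finset.range (g n)).image (V n), hFU, fun n => ?_, fun q => ?_⟩
  · simpa [subset_def] using fun k _ => hVW n k
  rcases q.2 with ⟨x, hxX, hx⟩ | hq
  · by_cases hgap : ∃ n, ∀ j, x j ∉ Ico n (M n)
    · obtain ⟨n, hn⟩ := hgap
      refine Or.inl ⟨n, hM n q fun i hi => ?_⟩
      by_contra h
      obtain ⟨j, rfl⟩ : i ∈ range x := hx ▸ show q.1 i = true by simpa using h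
      exact hn j hi
    · push Not at hgap
      have hdom : EvLE x fun k => M^[k + 1] 0 := Filter.Eventually.of_forall fun k =>
        ((hmono x hxX).lt_iterate_of_forall_exists_mem_Ico hgap k).le
      have hq : φ ⟨⟨x, hxX⟩, hdom⟩ = q := by
        ext i
        simp [φ, ← hx]
      obtain ⟨n, k, hk, hqk⟩ := hg ⟨⟨x, hxX⟩, hdom⟩
      exact Or.inr ⟨n, V n k, by simpa using ⟨k, hk, rfl⟩, hq ▸ hqk⟩
  · obtain ⟨n, hn⟩ := hq.bddAbove
    refine Or.inl ⟨n + 1, hM (n + 1) q fun i hi => ?_⟩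
    by_contra h
    exact absurd (hn (show q.1 i = true by simpa using h)) (not_le.2 hi.1)

/-- The Bartoszyński–Tsaban theorem: if `X ⊆ ω^ω` consists of strictly
increasing functions, has cardinality `𝔡`, and every `≤*`-dominated piece of it
has cardinality `< 𝔡`, then `X ∪ Fin` (viewed inside the Cantor space via
characteristic functions of ranges) is Menger. -/
theorem bartoszynski_tsaban_menger (X : Set (ℕ → ℕ))
    (hmono : ∀ x ∈ X, StrictMono x)
    (hcard : Cardinal.mk X = dNumber)
    (hsmall : ∀ d : ℕ → ℕ, Cardinal.mk {x : X // EvLE (x : ℕ → ℕ) d} < dNumber) :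
    MengerSpace
      ({f : ℕ → Bool | (∃ x ∈ X, {n | f n = true} = Set.range x) ∨
        {n | f n = true}.Finite}) :=
  bartoszynski_tsaban_menger_general X hmono hsmall
end

section
/- Let (F_n) be a non-decreasing sequence of finite subsets of a well-ordered set S with S = ⋃_n F_n, let (k_n) be strictly increasing naturals, and let Σ_n ⊆ (2^{k_n})^{F_n} satisfy condition (e_f). Define K ⊆ (2^ω)^S as the set of x such that for every n there is ν ∈ Σ_n with x(β)↾k_n = ν(β) for all β ∈ F_n. Then K is a nonempty closed subset of (2^ω)^S without isolated points (i.e., K is perfect), and for each n the sets [ν] ∩ K for ν ∈ Σ_n form a partition of K into nonempty relatively clopen pieces, each containing at least two pieces of the partition at level m for every m > n. -/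
/-! Cylinders `[ν]` are clopen and form a neighbourhood basis of `(2^ω)^S`; since `K` is the
intersection over `n` of the unions of the level-`n` cylinders of `Σ_n`, and such a union is
closed (it depends on finitely many coordinates), `K` is closed. Taking `C = ∅` in `(e_f)`
gives each `ν ∈ Σ_n` two extensions in `Σ_m` that differ at level `m`. Iterating one-step
extensions yields a nested sequence of nonempty cylinders, whose intersection is nonempty by
compactness and lies in `K` (lower levels are handled by downward coherence); so every `[ν]`
meets `K`. Then every basic neighbourhood of `x ∈ K` contains two distinct points of `K`, one
of which differs from `x`. -/

open Set

/-- `ν` (a level-`n` pattern, i.e. an element of `(2^{k n})^{F n}` coded as a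
function `S → ℕ → Bool`) is extended by `σ` (a level-`m` pattern): they agree
on all coordinates `(β, i)` with `β ∈ F n` and `i < k n`. -/
def PatExt {S : Type*} (F : ℕ → Finset S) (k : ℕ → ℕ) (n : ℕ)
    (ν σ : S → ℕ → Bool) : Prop :=
  ∀ β ∈ F n, ∀ i < k n, σ β i = ν β i

/-- Two level-`n` patterns are equal as elements of `(2^{k n})^{F n}`. -/
def PatEq {S : Type*} (F : ℕ → Finset S) (k : ℕ → ℕ) (n : ℕ)
    (ν ν' : S → ℕ → Bool) : Prop :=
  ∀ β ∈ F n, ∀ i < k n, ν β i = ν' β i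

/-- The cylinder `[ν]` determined by a level-`n` pattern `ν`. -/
def Cyl {S : Type*} (F : ℕ → Finset S) (k : ℕ → ℕ) (n : ℕ)
    (ν : S → ℕ → Bool) : Set (S → ℕ → Bool) :=
  {x | ∀ β ∈ F n, ∀ i < k n, x β i = ν β i}

/-- `e` is a coherent map from the set `C` of level-`n` patterns to level-`m`
patterns: each `e ν` extends `ν`, and whenever `β ∈ F n` is the minimal
coordinate at which `ν, ν' ∈ C` differ, `e ν` and `e ν'` agree on all
coordinates of `F m` below `β`. -/
def CoherentMap {S : Type*} [LinearOrder S] (F : ℕ → Finset S) (k : ℕ → ℕ)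
    (n m : ℕ) (C : Set (S → ℕ → Bool))
    (e : (S → ℕ → Bool) → (S → ℕ → Bool)) : Prop :=
  (∀ ν ∈ C, PatExt F k n ν (e ν)) ∧
  ∀ ν ∈ C, ∀ ν' ∈ C, ∀ β ∈ F n,
    ((∃ i < k n, ν β i ≠ ν' β i) ∧
      ∀ γ ∈ F n, γ < β → ∀ i < k n, ν γ i = ν' γ i) →
    ∀ γ ∈ F m, γ < β → ∀ i < k m, e ν γ i = e ν' γ i

/-- Condition `(e_f)`: for all `n < m`, every coherent map `e₀` from a set
`C ⊆ Σ_n` into `Σ_m` and every `ν₀ ∈ Σ_n ∖ C` admit two coherent extensions to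
`C ∪ {ν₀}` whose values at `ν₀` differ as level-`m` patterns. -/
def CondEf {S : Type*} [LinearOrder S] (F : ℕ → Finset S) (k : ℕ → ℕ)
    (Sig : ℕ → Set (S → ℕ → Bool)) : Prop :=
  ∀ n m : ℕ, n < m → ∀ C ⊆ Sig n,
    ∀ e₀ : (S → ℕ → Bool) → (S → ℕ → Bool),
      CoherentMap F k n m C e₀ → (∀ ν ∈ C, e₀ ν ∈ Sig m) →
      ∀ ν₀ ∈ Sig n, ν₀ ∉ C →
        ∃ e e' : (S → ℕ → Bool) → (S → ℕ → Bool),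
          CoherentMap F k n m (insert ν₀ C) e ∧
          CoherentMap F k n m (insert ν₀ C) e' ∧
          (∀ ν ∈ C, e ν = e₀ ν ∧ e' ν = e₀ ν) ∧
          (∀ ν ∈ insert ν₀ C, e ν ∈ Sig m ∧ e' ν ∈ Sig m) ∧
          ¬ PatEq F k m (e ν₀) (e' ν₀)

open Filter Topology

/-- The set `K` of the construction. -/
def patternKernel {S : Type*} (F : ℕ → Finset S) (k : ℕ → ℕ)
    (Sig : ℕ → Set (S → ℕ → Bool)) : Set (S → ℕ → Bool) :=
  {x | ∀ n, ∃ ν ∈ Sig n, x ∈ Cyl F k n ν}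

section Cylinders

variable {S : Type*} {F : ℕ → Finset S} {k : ℕ → ℕ} {n m : ℕ} {x ν ν' σ : S → ℕ → Bool}

theorem mem_cyl_self : x ∈ Cyl F k n x := fun _ _ _ _ => rfl

theorem cyl_eq_of_mem (h : x ∈ Cyl F k n ν) : Cyl F k n x = Cyl F k n ν := by
  ext y
  constructor <;> intro hy β hβ i hi <;> rw [hy β hβ i hi, h β hβ i hi]

theorem cyl_eq_or_inter_eq_empty :
    Cyl F k n ν = Cyl F k n ν' ∨ Cyl F k n ν ∩ Cyl F k n ν' = ∅ := by
  rcases eq_empty_or_nonempty (Cyl F k n ν ∩ Cyl F k n ν') with h | ⟨z, hzν, hzν'⟩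
  · exact Or.inr h
  · exact Or.inl ((cyl_eq_of_mem hzν).symm.trans (cyl_eq_of_mem hzν'))

theorem cyl_subset_cyl_of_patExt (hF : Monotone F) (hk : Monotone k) (hnm : n ≤ m)
    (h : PatExt F k n ν σ) : Cyl F k m σ ⊆ Cyl F k n ν := fun x hx β hβ i hi => by
  rw [hx β (hF hnm hβ) i (lt_of_lt_of_le hi (hk hnm)), h β hβ i hi]

theorem ne_of_mem_cyl_of_not_patEq {y y' : S → ℕ → Bool} (hy : y ∈ Cyl F k m σ)
    (hy' : y' ∈ Cyl F k m ν) (h : ¬ PatEq F k m σ ν) : y ≠ y' := by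
  rintro rfl
  exact h fun β hβ i hi => (hy β hβ i hi).symm.trans (hy' β hβ i hi)

theorem isClopen_cyl : IsClopen (Cyl F k n ν) := by
  have h : Cyl F k n ν =
      ⋂ β ∈ F n, ⋂ i ∈ Finset.range (k n), {x : S → ℕ → Bool | x β i = ν β i} := by
    ext x; simp [Cyl]
  rw [h]
  refine isClopen_biInter_finset fun β _ => isClopen_biInter_finset fun i _ => ?_
  exact (isClopen_discrete {ν β i}).preimage ((continuous_apply i).comp (continuous_apply β))

theorem isClosed_biUnion_cyl (T : Set (S → ℕ → Bool)) :
    IsClosed (⋃ ν ∈ T, Cyl F k n ν) := by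
  refine isClosed_of_closure_subset fun y hy => ?_
  obtain ⟨z, hzy, hz⟩ :=
    mem_closure_iff_nhds.1 hy _ (isClopen_cyl.isOpen.mem_nhds (mem_cyl_self (x := y)))
  obtain ⟨ν, hν, hzν⟩ := mem_iUnion₂.1 hz
  refine mem_biUnion hν ?_
  rw [← cyl_eq_of_mem hzν, cyl_eq_of_mem hzy]
  exact mem_cyl_self

theorem eventually_cyl_subset_of_mem_nhds (hF : Monotone F) (hFcov : ∀ β, ∃ n, β ∈ F n)
    (hk : Tendsto k atTop atTop) {U : Set (S → ℕ → Bool)} (hU : U ∈ 𝓝 x) :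
    ∀ᶠ n in atTop, Cyl F k n x ⊆ U := by
  rw [nhds_pi, Filter.mem_pi'] at hU
  obtain ⟨I, t, ht, hIt⟩ := hU
  have hcoord : ∀ β, ∃ (J : Finset ℕ) (u : ℕ → Set Bool),
      (∀ i, u i ∈ 𝓝 (x β i)) ∧ (J : Set ℕ).pi u ⊆ t β := fun β => by
    simpa only [nhds_pi, Filter.mem_pi'] using ht β
  choose J u hu hJu using hcoord
  have hlevel : ∀ β i, ∀ᶠ n in atTop, β ∈ F n ∧ i < k n := fun β i =>
    have ⟨n₀, hn₀⟩ := hFcov β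
    (eventually_ge_atTop n₀ |>.mono fun _ hn => hF hn hn₀).and (hk.eventually_gt_atTop i)
  filter_upwards [(I.eventually_all).2 fun β _ => (J β).eventually_all.2 fun i _ => hlevel β i]
    with n hn y hy
  refine hIt fun β hβ => hJu β fun i hi => ?_
  obtain ⟨hβn, hin⟩ := hn β hβ i hi
  rw [hy β hβn i hin]
  exact mem_of_mem_nhds (hu β i)

theorem exists_forall_mem_cyl (hF : Monotone F) (hk : Monotone k) (g : ℕ → S → ℕ → Bool)
    (hg : ∀ j, PatExt F k j (g j) (g (j + 1))) : ∃ x, ∀ j, x ∈ Cyl F k j (g j) := by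
  obtain ⟨x, hx⟩ := IsCompact.nonempty_iInter_of_sequence_nonempty_isCompact_isClosed
    (fun j => Cyl F k j (g j))
    (fun j => cyl_subset_cyl_of_patExt hF hk j.le_succ (hg j))
    (fun j => ⟨g j, mem_cyl_self⟩) isClopen_cyl.isClosed.isCompact
    (fun _ => isClopen_cyl.isClosed)
  exact ⟨x, mem_iInter.1 hx⟩

end Cylinders

section Kernel

variable {S : Type*} {F : ℕ → Finset S} {k : ℕ → ℕ} {Sig : ℕ → Set (S → ℕ → Bool)} {n m : ℕ}
  {ν : S → ℕ → Bool}

theorem CondEf.exists_two_patExt [LinearOrder S] (hef : CondEf F k Sig) (hnm : n < m)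
    (hν : ν ∈ Sig n) :
    ∃ σ ∈ Sig m, ∃ σ' ∈ Sig m, PatExt F k n ν σ ∧ PatExt F k n ν σ' ∧ ¬ PatEq F k m σ σ' := by
  obtain ⟨e, e', he, he', -, hmem, hne⟩ :=
    hef n m hnm ∅ (empty_subset _) id ⟨fun _ h => h.elim, fun _ h => h.elim⟩
      (fun _ h => h.elim) ν hν (notMem_empty ν)
  exact ⟨e ν, (hmem ν (mem_insert _ _)).1, e' ν, (hmem ν (mem_insert _ _)).2,
    he.1 ν (mem_insert _ _), he'.1 ν (mem_insert _ _), hne⟩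

theorem exists_seq_patExt_succ (hstep : ∀ m, ∀ σ ∈ Sig m, ∃ τ ∈ Sig (m + 1), PatExt F k m σ τ)
    (hν : ν ∈ Sig n) :
    ∃ g : ℕ → S → ℕ → Bool,
      g 0 = ν ∧ ∀ j, g j ∈ Sig (n + j) ∧ PatExt F k (n + j) (g j) (g (j + 1)) := by
  choose! next hnext_mem hnext_ext using hstep
  let g : ℕ → S → ℕ → Bool := fun j => Nat.rec ν (fun j σ => next (n + j) σ) j
  have hg : ∀ j, g j ∈ Sig (n + j) := fun j => by
    induction j with
    | zero => exact hν
    | succ j ih => exact hnext_mem _ _ ih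
  exact ⟨g, rfl, fun j => ⟨hg j, hnext_ext _ _ (hg j)⟩⟩

theorem patternKernel_eq_iInter :
    patternKernel F k Sig = ⋂ n, ⋃ ν ∈ Sig n, Cyl F k n ν := by
  ext x
  simp [patternKernel]

theorem isClosed_patternKernel : IsClosed (patternKernel F k Sig) := by
  rw [patternKernel_eq_iInter]
  exact isClosed_iInter fun _ => isClosed_biUnion_cyl _

theorem cyl_inter_patternKernel_nonempty [LinearOrder S] (hF : Monotone F) (hk : Monotone k)
    (hdown : ∀ n m : ℕ, n ≤ m → ∀ σ ∈ Sig m, ∃ ν ∈ Sig n, PatExt F k n ν σ)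
    (hef : CondEf F k Sig) (hν : ν ∈ Sig n) :
    (Cyl F k n ν ∩ patternKernel F k Sig).Nonempty := by
  have hstep : ∀ m, ∀ σ ∈ Sig m, ∃ τ ∈ Sig (m + 1), PatExt F k m σ τ := fun m σ hσ =>
    have ⟨τ, hτ, _, _, hστ, _⟩ := hef.exists_two_patExt m.lt_succ_self hσ
    ⟨τ, hτ, hστ⟩
  obtain ⟨g, rfl, hg⟩ := exists_seq_patExt_succ hstep hν
  obtain ⟨x, hx⟩ := exists_forall_mem_cyl (F := fun j => F (n + j)) (k := fun j => k (n + j))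
    (fun _ _ h => hF (by omega)) (fun _ _ h => hk (by omega)) g (fun j => (hg j).2)
  refine ⟨x, hx 0, fun n' => ?_⟩
  rcases le_total n n' with hnn' | hn'n
  · obtain ⟨j, rfl⟩ := Nat.exists_eq_add_of_le hnn'
    exact ⟨g j, (hg j).1, hx j⟩
  · obtain ⟨ν', hν', hext⟩ := hdown n' n hn'n (g 0) (hg 0).1
    exact ⟨ν', hν', cyl_subset_cyl_of_patExt hF hk hn'n hext (hx 0)⟩

theorem preperfect_patternKernel [LinearOrder S] (hF : Monotone F) (hFcov : ∀ β, ∃ n, β ∈ F n)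
    (hk : StrictMono k) (hdown : ∀ n m : ℕ, n ≤ m → ∀ σ ∈ Sig m, ∃ ν ∈ Sig n, PatExt F k n ν σ)
    (hef : CondEf F k Sig) : Preperfect (patternKernel F k Sig) := by
  intro x hx
  rw [accPt_iff_nhds]
  intro U hU
  obtain ⟨n, hn⟩ := (eventually_cyl_subset_of_mem_nhds hF hFcov hk.tendsto_atTop hU).exists
  obtain ⟨ν, hν, hxν⟩ := hx n
  obtain ⟨σ, hσ, σ', hσ', hνσ, hνσ', hσσ'⟩ := hef.exists_two_patExt n.lt_succ_self hν
  obtain ⟨y, hyσ, hyK⟩ := cyl_inter_patternKernel_nonempty hF hk.monotone hdown hef hσ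
  obtain ⟨y', hy'σ', hy'K⟩ := cyl_inter_patternKernel_nonempty hF hk.monotone hdown hef hσ'
  have hsub : ∀ {τ}, PatExt F k n ν τ → Cyl F k (n + 1) τ ⊆ U := fun hντ =>
    (cyl_subset_cyl_of_patExt hF hk.monotone n.le_succ hντ).trans ((cyl_eq_of_mem hxν).symm ▸ hn)
  rcases eq_or_ne y x with rfl | hyx
  · exact ⟨y', ⟨hsub hνσ' hy'σ', hy'K⟩, (ne_of_mem_cyl_of_not_patEq hyσ hy'σ' hσσ').symm⟩
  · exact ⟨y, ⟨hsub hνσ hyσ, hyK⟩, hyx⟩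

end Kernel

theorem perfect_kernel_of_condEf_general {S : Type*} [LinearOrder S]
    (F : ℕ → Finset S) (hFmono : Monotone F) (hFcov : ∀ β : S, ∃ n, β ∈ F n)
    (k : ℕ → ℕ) (hk : StrictMono k)
    (Sig : ℕ → Set (S → ℕ → Bool))
    (hne : ∀ n, (Sig n).Nonempty)
    (hdown : ∀ n m : ℕ, n ≤ m → ∀ σ ∈ Sig m, ∃ ν ∈ Sig n, PatExt F k n ν σ)
    (hef : CondEf F k Sig) :
    (Perfect {x : S → ℕ → Bool | ∀ n, ∃ ν ∈ Sig n, x ∈ Cyl F k n ν} ∧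
      ({x : S → ℕ → Bool | ∀ n, ∃ ν ∈ Sig n, x ∈ Cyl F k n ν}).Nonempty) ∧
    ∀ n : ℕ,
      (∀ ν ∈ Sig n,
        (Cyl F k n ν ∩
          {x : S → ℕ → Bool | ∀ n', ∃ ν' ∈ Sig n', x ∈ Cyl F k n' ν'}).Nonempty) ∧
      ({x : S → ℕ → Bool | ∀ n', ∃ ν' ∈ Sig n', x ∈ Cyl F k n' ν'} ⊆
        ⋃ ν ∈ Sig n, Cyl F k n ν) ∧
      (∀ ν ∈ Sig n, ∀ ν' ∈ Sig n,
        Cyl F k n ν = Cyl F k n ν' ∨ Cyl F k n ν ∩ Cyl F k n ν' = ∅) ∧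
      (∀ ν ∈ Sig n,
        IsClopen ((fun x : {x : S → ℕ → Bool |
            ∀ n', ∃ ν' ∈ Sig n', x ∈ Cyl F k n' ν'} => (x : S → ℕ → Bool)) ⁻¹'
          Cyl F k n ν)) ∧
      (∀ m : ℕ, n < m → ∀ ν ∈ Sig n,
        ∃ σ ∈ Sig m, ∃ σ' ∈ Sig m,
          PatExt F k n ν σ ∧ PatExt F k n ν σ' ∧ ¬ PatEq F k m σ σ') := by
  have hmeets : ∀ n, ∀ ν ∈ Sig n, (Cyl F k n ν ∩ patternKernel F k Sig).Nonempty :=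
    fun _ _ hν => cyl_inter_patternKernel_nonempty hFmono hk.monotone hdown hef hν
  obtain ⟨ν₀, hν₀⟩ := hne 0
  refine ⟨⟨⟨isClosed_patternKernel, preperfect_patternKernel hFmono hFcov hk hdown hef⟩,
      (hmeets 0 ν₀ hν₀).mono inter_subset_right⟩, fun n => ⟨hmeets n, ?_, ?_, ?_, ?_⟩⟩
  · intro x hx
    obtain ⟨ν, hν, hxν⟩ := hx n
    exact mem_biUnion hν hxν
  · exact fun _ _ _ _ => cyl_eq_or_inter_eq_empty
  · exact fun _ _ => isClopen_cyl.preimage continuous_subtype_val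
  · exact fun m hnm _ hν => hef.exists_two_patExt hnm hν

/-- The perfect-set construction of Section 2: given a non-decreasing sequence
`F` of finite subsets of the well-ordered set `S` covering `S`, strictly
increasing `k`, and pattern families `Σ_n` (nonempty, downward coherent)
satisfying `(e_f)`, the set
`K = {x : (2^ω)^S | ∀ n, ∃ ν ∈ Σ_n, x ∈ [ν]}` is a nonempty perfect (closed,
crowded) set; for each `n` the traces `[ν] ∩ K` (`ν ∈ Σ_n`) are nonempty,
relatively clopen, cover `K`, are pairwise equal or disjoint, and for every
`m > n` each `ν ∈ Σ_n` has at least two `Σ_m`-extensions which differ as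
level-`m` patterns. -/
theorem perfect_kernel_of_condEf {S : Type*} [LinearOrder S] [WellFoundedLT S]
    (F : ℕ → Finset S) (hFmono : Monotone F) (hFcov : ∀ β : S, ∃ n, β ∈ F n)
    (k : ℕ → ℕ) (hk : StrictMono k)
    (Sig : ℕ → Set (S → ℕ → Bool))
    (hne : ∀ n, (Sig n).Nonempty)
    (hdown : ∀ n m : ℕ, n ≤ m → ∀ σ ∈ Sig m, ∃ ν ∈ Sig n, PatExt F k n ν σ)
    (hef : CondEf F k Sig) :
    (Perfect {x : S → ℕ → Bool | ∀ n, ∃ ν ∈ Sig n, x ∈ Cyl F k n ν} ∧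
      ({x : S → ℕ → Bool | ∀ n, ∃ ν ∈ Sig n, x ∈ Cyl F k n ν}).Nonempty) ∧
    ∀ n : ℕ,
      (∀ ν ∈ Sig n,
        (Cyl F k n ν ∩
          {x : S → ℕ → Bool | ∀ n', ∃ ν' ∈ Sig n', x ∈ Cyl F k n' ν'}).Nonempty) ∧
      ({x : S → ℕ → Bool | ∀ n', ∃ ν' ∈ Sig n', x ∈ Cyl F k n' ν'} ⊆
        ⋃ ν ∈ Sig n, Cyl F k n ν) ∧
      (∀ ν ∈ Sig n, ∀ ν' ∈ Sig n,
        Cyl F k n ν = Cyl F k n ν' ∨ Cyl F k n ν ∩ Cyl F k n ν' = ∅) ∧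
      (∀ ν ∈ Sig n,
        IsClopen ((fun x : {x : S → ℕ → Bool |
            ∀ n', ∃ ν' ∈ Sig n', x ∈ Cyl F k n' ν'} => (x : S → ℕ → Bool)) ⁻¹'
          Cyl F k n ν)) ∧
      (∀ m : ℕ, n < m → ∀ ν ∈ Sig n,
        ∃ σ ∈ Sig m, ∃ σ' ∈ Sig m,
          PatExt F k n ν σ ∧ PatExt F k n ν σ' ∧ ¬ PatEq F k m σ σ') :=
  perfect_kernel_of_condEf_general F hFmono hFcov k hk Sig hne hdown hef
end
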